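/- arXiv:2006.09371 — 2 statements merged into one kernel-verified Lean document; each statement's English description precedes it below -/
import Mathlib

section
/- Let M be a multiplication R-module, X a proper submodule of M, and ψ : S(R) → S(R) ∪ {∅} a function with (φ(X):_R M) = ψ((X:_R M)). Then X is a φ-prime submodule of M if and only if (X:_R M) is a ψ-prime ideal of R. -/
/-!
Every submodule of a multiplication module has the form `M I` with `I = (Y :_R M)`, and
`(M I) J ⊆ N` holds iff `I J ⊆ (N :_R M)`, both for a submodule `N` and for `N = ∅` (where both
sides fail, since they contain `0`). Applied to `N = X` and `N = φ(X)`, this turns the defining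
condition of φ-primeness of `X` into that of ψ-primeness of `(X :_R M)`.
-/

open MulOpposite Submodule

variable {R : Type*} [Ring R] {M : Type*} [AddCommGroup M] [Module Rᵐᵒᵖ M]

/-- The product `Y·A` of a set of elements of a right `R`-module `M` and a set of ring
elements: the submodule of all finite sums `Σ yᵢ·aᵢ` with `yᵢ ∈ Y`, `aᵢ ∈ A`. -/
def sProd (Y : Set M) (A : Set R) : Submodule Rᵐᵒᵖ M :=
  Submodule.span Rᵐᵒᵖ {z | ∃ y ∈ Y, ∃ a ∈ A, z = op a • y}

/-- `(X :_R N) = {r : R | N·r ⊆ X}`. -/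
def colR (X : Set M) (N : Set M) : Set R := {r | ∀ m ∈ N, op r • m ∈ X}

/-- `(X :_M A) = {m : M | m·A ⊆ X}`. -/
def colM (X : Set M) (A : Set R) : Set M := {m | ∀ r ∈ A, op r • m ∈ X}

/-- A function `φ : S(M) → S(M) ∪ {∅}` (values are either `∅` or submodules) with
`φ(X) ⊆ X` for every submodule `X`. -/
def GoodPhi (φ : Submodule Rᵐᵒᵖ M → Set M) : Prop :=
  ∀ N : Submodule Rᵐᵒᵖ M, φ N ⊆ N ∧
    (φ N = (∅ : Set M) ∨ ∃ P : Submodule Rᵐᵒᵖ M, φ N = (P : Set M))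

/-- `X` is a φ-prime submodule of the right `R`-module `M`. -/
def PhiPrime (φ : Submodule Rᵐᵒᵖ M → Set M) (X : Submodule Rᵐᵒᵖ M) : Prop :=
  X ≠ ⊤ ∧ ∀ (Y : Submodule Rᵐᵒᵖ M) (I : TwoSidedIdeal R),
    (sProd (Y : Set M) (I : Set R) : Set M) ⊆ (X : Set M) →
    ¬((sProd (Y : Set M) (I : Set R) : Set M) ⊆ φ X) →
    (Y : Set M) ⊆ (X : Set M) ∨ (I : Set R) ⊆ colR (X : Set M) Set.univ

/-- `X` is a prime submodule of the right `R`-module `M`. -/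
def PrimeSub (X : Submodule Rᵐᵒᵖ M) : Prop :=
  X ≠ ⊤ ∧ ∀ (Y : Submodule Rᵐᵒᵖ M) (I : TwoSidedIdeal R),
    (sProd (Y : Set M) (I : Set R) : Set M) ⊆ (X : Set M) →
    (Y : Set M) ⊆ (X : Set M) ∨ (I : Set R) ⊆ colR (X : Set M) Set.univ

/-- `X` is a weakly prime submodule of the right `R`-module `M`. -/
def WeaklyPrime (X : Submodule Rᵐᵒᵖ M) : Prop :=
  X ≠ ⊤ ∧ ∀ (Y : Submodule Rᵐᵒᵖ M) (I : TwoSidedIdeal R),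
    sProd (Y : Set M) (I : Set R) ≠ ⊥ →
    (sProd (Y : Set M) (I : Set R) : Set M) ⊆ (X : Set M) →
    (Y : Set M) ⊆ (X : Set M) ∨ (I : Set R) ⊆ colR (X : Set M) Set.univ

/-- `X` is an almost prime submodule of the right `R`-module `M`. -/
def AlmostPrime (X : Submodule Rᵐᵒᵖ M) : Prop :=
  X ≠ ⊤ ∧ ∀ (Y : Submodule Rᵐᵒᵖ M) (I : TwoSidedIdeal R),
    (sProd (Y : Set M) (I : Set R) : Set M) ⊆ (X : Set M) →
    ¬((sProd (Y : Set M) (I : Set R) : Set M) ⊆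
        (sProd (X : Set M) ((colR (X : Set M) Set.univ : Set R)) : Set M)) →
    (Y : Set M) ⊆ (X : Set M) ∨ (I : Set R) ⊆ colR (X : Set M) Set.univ

/-- `powAct X n = X (X :_R M)ⁿ`. -/
def powAct (X : Submodule Rᵐᵒᵖ M) : ℕ → Submodule Rᵐᵒᵖ M
  | 0 => X
  | n + 1 => sProd (powAct X n : Set M) ((colR (X : Set M) Set.univ : Set R))

/-- The product of two sets of ring elements: all finite sums `Σ aᵢbᵢ`, `aᵢ ∈ A`, `bᵢ ∈ B`. -/
def idMul (A B : Set R) : Set R :=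
  (AddSubmonoid.closure {x | ∃ a ∈ A, ∃ b ∈ B, x = a * b} : AddSubmonoid R)

/-- A prime (two-sided) ideal of a possibly noncommutative ring. -/
def TIPrime (P : TwoSidedIdeal R) : Prop :=
  (P : Set R) ≠ Set.univ ∧ ∀ I J : TwoSidedIdeal R,
    idMul (I : Set R) (J : Set R) ⊆ (P : Set R) →
    (I : Set R) ⊆ (P : Set R) ∨ (J : Set R) ⊆ (P : Set R)

/-- The radical `√A`: the intersection of all prime two-sided ideals containing `A`. -/
def radSet (A : Set R) : Set R :=
  {x | ∀ P : TwoSidedIdeal R, TIPrime P → A ⊆ (P : Set R) → x ∈ (P : Set R)}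

/-- A ψ-prime two-sided ideal of a possibly noncommutative ring. -/
def PsiPrime (ψ : TwoSidedIdeal R → Set R) (A : TwoSidedIdeal R) : Prop :=
  (A : Set R) ≠ Set.univ ∧ ∀ I J : TwoSidedIdeal R,
    idMul (I : Set R) (J : Set R) ⊆ (A : Set R) →
    ¬(idMul (I : Set R) (J : Set R) ⊆ ψ A) →
    (I : Set R) ⊆ (A : Set R) ∨ (J : Set R) ⊆ (A : Set R)

/-- The induced function `φ_Y` on submodules of `M/Y`: `φ_Y(X/Y) = (φ(X)+Y)/Y`. -/
def phiQuot (φ : Submodule Rᵐᵒᵖ M → Set M) (Y : Submodule Rᵐᵒᵖ M) :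
    Submodule Rᵐᵒᵖ (M ⧸ Y) → Set (M ⧸ Y) :=
  fun Q => Y.mkQ '' (φ (Q.comap Y.mkQ))

/-- The colon `(X :_R Y)` of two submodules, as a two-sided ideal of `R`. -/
def colTI (X Y : Submodule Rᵐᵒᵖ M) : TwoSidedIdeal R :=
  TwoSidedIdeal.mk' (colR (X : Set M) (Y : Set M))
    (by intro m hm; simp)
    (by intro x y hx hy m hm
        rw [op_add, add_smul]
        exact X.add_mem (hx m hm) (hy m hm))
    (by intro x hx m hm
        rw [op_neg, neg_smul]
        exact X.neg_mem (hx m hm))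
    (by intro x y hy m hm
        rw [op_mul, mul_smul]
        exact hy _ (Y.smul_mem (op x) hm))
    (by intro x y hx m hm
        rw [op_mul, mul_smul]
        exact X.smul_mem (op y) (hx m hm))

/-- The colon `(X :_M I)` as a submodule of `M`, for a two-sided ideal `I`. -/
def colMS (X : Submodule Rᵐᵒᵖ M) (I : TwoSidedIdeal R) : Submodule Rᵐᵒᵖ M where
  carrier := colM (X : Set M) (I : Set R)
  add_mem' := by
    intro a b ha hb r hr
    rw [smul_add]
    exact X.add_mem (ha r hr) (hb r hr)
  zero_mem' := by
    intro r hr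
    rw [smul_zero]
    exact X.zero_mem
  smul_mem' := by
    intro c m hm r hr
    rw [← mul_smul, show op r * c = op (unop c * r) from by rw [op_mul, op_unop]]
    exact hm _ (I.mul_mem_left _ _ hr)

/-- `M` is a multiplication right `R`-module: every submodule `X` equals `M(X :_R M)`. -/
def IsMultiplication (R : Type*) [Ring R] (M : Type*) [AddCommGroup M]
    [Module Rᵐᵒᵖ M] : Prop :=
  ∀ X : Submodule Rᵐᵒᵖ M, X = sProd (Set.univ : Set M) ((colR (X : Set M) Set.univ : Set R))

/-- The product `XY = M(X :_R M)(Y :_R M)` of two submodules of a multiplication module. -/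
def mprod (X Y : Submodule Rᵐᵒᵖ M) : Submodule Rᵐᵒᵖ M :=
  sProd ((sProd (Set.univ : Set M) ((colR (X : Set M) Set.univ : Set R)) : Submodule Rᵐᵒᵖ M) : Set M)
    ((colR (Y : Set M) Set.univ : Set R))

/-- A φ-m-system in a right `R`-module `M`. -/
def PhiMSystem (φ : Submodule Rᵐᵒᵖ M → Set M) (S : Set M) : Prop :=
  S.Nonempty ∧ ∀ (Y₁ Y₂ : Submodule Rᵐᵒᵖ M) (I : TwoSidedIdeal R),
    ((Y₁ ⊔ Y₂ : Submodule Rᵐᵒᵖ M) : Set M) ∩ S ≠ ∅ →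
    ((Y₁ ⊔ sProd (Set.univ : Set M) (I : Set R) : Submodule Rᵐᵒᵖ M) : Set M) ∩ S ≠ ∅ →
    ¬((sProd (Y₂ : Set M) (I : Set R) : Set M) ⊆ φ (Submodule.span Rᵐᵒᵖ Sᶜ)) →
    ((Y₁ ⊔ sProd (Y₂ : Set M) (I : Set R) : Submodule Rᵐᵒᵖ M) : Set M) ∩ S ≠ ∅

lemma coe_colTI_top (X : Submodule Rᵐᵒᵖ M) :
    (colTI X ⊤ : Set R) = colR (X : Set M) Set.univ :=
  Set.ext fun _ => (TwoSidedIdeal.mem_mk' ..).trans (by simp only [colR, top_coe])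

lemma colR_empty_univ : colR (∅ : Set M) (Set.univ : Set M) = (∅ : Set R) :=
  Set.eq_empty_of_forall_notMem fun _ h => h 0 trivial

lemma sProd_subset_iff (X : Submodule Rᵐᵒᵖ M) (Y : Set M) (A : Set R) :
    (sProd Y A : Set M) ⊆ X ↔ ∀ y ∈ Y, ∀ a ∈ A, op a • y ∈ X := by
  refine ⟨fun h y hy a ha => h (subset_span ⟨y, hy, a, ha, rfl⟩), fun h => ?_⟩
  exact span_le.mpr (by rintro _ ⟨y, hy, a, ha, rfl⟩; exact h y hy a ha)

lemma sProd_univ_subset_iff (X : Submodule Rᵐᵒᵖ M) (A : Set R) :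
    (sProd (Set.univ : Set M) A : Set M) ⊆ X ↔ A ⊆ colR (X : Set M) Set.univ := by
  rw [sProd_subset_iff]
  exact ⟨fun h a ha m _ => h m trivial a ha, fun h m _ a ha => h ha m trivial⟩

lemma sProd_sProd_univ_subset_iff (X : Submodule Rᵐᵒᵖ M) (I J : TwoSidedIdeal R) :
    (sProd (sProd (Set.univ : Set M) (I : Set R) : Set M) (J : Set R) : Set M) ⊆ X ↔
      idMul (I : Set R) (J : Set R) ⊆ colR (X : Set M) Set.univ := by
  constructor
  · intro h x hx
    rw [← coe_colTI_top]
    refine AddSubmonoid.closure_induction ?_ (zero_mem _) (fun _ _ _ _ => add_mem) hx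
    rintro _ ⟨a, ha, b, hb, rfl⟩
    rw [coe_colTI_top]
    intro m _
    rw [op_mul, mul_smul]
    exact h (subset_span ⟨op a • m, subset_span ⟨m, trivial, a, ha, rfl⟩, b, hb, rfl⟩)
  · intro h
    have hIJ : sProd (Set.univ : Set M) (I : Set R) ≤ colMS X J := by
      refine span_le.mpr ?_
      rintro _ ⟨m, -, a, ha, rfl⟩ b hb
      rw [← mul_smul, ← op_mul]
      exact h (AddSubmonoid.subset_closure ⟨a, ha, b, hb, rfl⟩) m trivial
    exact (sProd_subset_iff X _ _).mpr fun y hy b hb => hIJ hy b hb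

lemma sProd_sProd_univ_subset_iff_of_eq_empty_or_submodule {S : Set M}
    (hS : S = ∅ ∨ ∃ P : Submodule Rᵐᵒᵖ M, S = P) (I J : TwoSidedIdeal R) :
    (sProd (sProd (Set.univ : Set M) (I : Set R) : Set M) (J : Set R) : Set M) ⊆ S ↔
      idMul (I : Set R) (J : Set R) ⊆ colR S Set.univ := by
  rcases hS with rfl | ⟨P, rfl⟩
  · rw [colR_empty_univ]
    exact iff_of_false (fun h => h (zero_mem _)) (fun h => h (AddSubmonoid.zero_mem _))
  · exact sProd_sProd_univ_subset_iff P I J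

lemma coe_colTI_top_ne_univ {X : Submodule Rᵐᵒᵖ M} (hX : X ≠ ⊤) :
    (colTI X ⊤ : Set R) ≠ Set.univ := by
  rw [coe_colTI_top]
  intro h
  have hone : (1 : R) ∈ colR (X : Set M) Set.univ := h ▸ Set.mem_univ _
  exact hX (eq_top_iff.mpr fun m _ => by simpa using hone m trivial)

lemma IsMultiplication.sProd_univ_colTI_top (hm : IsMultiplication R M)
    (Y : Submodule Rᵐᵒᵖ M) : sProd (Set.univ : Set M) (colTI Y ⊤ : Set R) = Y := by
  rw [coe_colTI_top]
  exact (hm Y).symm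

theorem PhiPrime.psiPrime_colTI_top {φ : Submodule Rᵐᵒᵖ M → Set M}
    {ψ : TwoSidedIdeal R → Set R} {X : Submodule Rᵐᵒᵖ M} (hX : PhiPrime φ X)
    (hφX : φ X = ∅ ∨ ∃ P : Submodule Rᵐᵒᵖ M, φ X = P)
    (hψφ : colR (φ X) Set.univ = ψ (colTI X ⊤)) :
    PsiPrime ψ (colTI X ⊤) := by
  obtain ⟨hX, hprime⟩ := hX
  refine ⟨coe_colTI_top_ne_univ hX, fun I J hIJ hψ => ?_⟩
  rw [coe_colTI_top] at hIJ ⊢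
  rw [← sProd_sProd_univ_subset_iff] at hIJ
  rw [← hψφ, ← sProd_sProd_univ_subset_iff_of_eq_empty_or_submodule hφX] at hψ
  rcases hprime _ J hIJ hψ with hI | hJ
  · exact Or.inl ((sProd_univ_subset_iff X _).mp hI)
  · exact Or.inr hJ

theorem PsiPrime.phiPrime_of_isMultiplication (hm : IsMultiplication R M)
    {φ : Submodule Rᵐᵒᵖ M → Set M} {ψ : TwoSidedIdeal R → Set R} {X : Submodule Rᵐᵒᵖ M}
    (hA : PsiPrime ψ (colTI X ⊤)) (hX : X ≠ ⊤)
    (hφX : φ X = ∅ ∨ ∃ P : Submodule Rᵐᵒᵖ M, φ X = P)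
    (hψφ : colR (φ X) Set.univ = ψ (colTI X ⊤)) :
    PhiPrime φ X := by
  obtain ⟨-, hprime⟩ := hA
  refine ⟨hX, fun Y J hYJ hφ => ?_⟩
  rw [← hm.sProd_univ_colTI_top Y] at hYJ hφ ⊢
  rw [sProd_sProd_univ_subset_iff, ← coe_colTI_top] at hYJ
  rw [sProd_sProd_univ_subset_iff_of_eq_empty_or_submodule hφX, hψφ] at hφ
  rw [sProd_univ_subset_iff, ← coe_colTI_top]
  exact hprime _ J hYJ hφ

/-- Let `M` be a multiplication module, `X` a proper submodule of
`M`, `ψ : S(R) → S(R) ∪ {∅}` with `(φ(X) :_R M) = ψ((X :_R M))`. Then `X` is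
φ-prime in `M` iff `(X :_R M)` is a ψ-prime ideal of `R`. -/
theorem stmt_17 (hm : IsMultiplication R M)
    (φ : Submodule Rᵐᵒᵖ M → Set M) (hφ : GoodPhi φ)
    (ψ : TwoSidedIdeal R → Set R)
    (X : Submodule Rᵐᵒᵖ M) (hX : X ≠ ⊤)
    (hψφ : (colR (φ X) Set.univ : Set R) = ψ (colTI X ⊤)) :
    PhiPrime φ X ↔ PsiPrime ψ (colTI X ⊤) :=
  ⟨fun h => h.psiPrime_colTI_top (hφ X).2 hψφ,
    fun h => h.phiPrime_of_isMultiplication hm hX (hφ X).2 hψφ⟩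
end

section
/- Let X be a proper submodule of M. Then X is a φ-prime submodule of M if and only if S = M − X is a φ-m-system. -/
open MulOpposite Submodule

variable {R : Type*} [Ring R] {M : Type*} [AddCommGroup M] [Module Rᵐᵒᵖ M]

/-! A submodule meets `M − X` exactly when it is not contained in `X`, and `⟨(M − X)ᶜ⟩ = X`.
So, for `S = M − X`, the `φ`-m-system condition says: if `Y₁ + Y₂I ⊆ X` and `Y₂I ⊄ φ(X)`, then
`Y₁ + Y₂ ⊆ X` or `Y₁ + MI ⊆ X`. Since `Y₁ ⊆ X` is already assumed, `Y₁` drops out, and what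
remains is `φ`-primeness of `X`, with `MI ⊆ X` read as `I ⊆ (X :_R M)`. -/

theorem sProd_le_iff {Y : Set M} {A : Set R} {X : Submodule Rᵐᵒᵖ M} :
    sProd Y A ≤ X ↔ ∀ y ∈ Y, ∀ a ∈ A, op a • y ∈ X := by
  simp only [sProd, span_le, Set.ofPred_subset, SetLike.mem_coe]
  exact ⟨fun h y hy a ha => h _ ⟨y, hy, a, ha, rfl⟩, fun h _ ⟨y, hy, a, ha, hz⟩ => hz ▸ h y hy a ha⟩

theorem sProd_univ_le_iff {A : Set R} {X : Submodule Rᵐᵒᵖ M} :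
    sProd Set.univ A ≤ X ↔ A ⊆ colR (X : Set M) Set.univ := by
  rw [sProd_le_iff]
  exact ⟨fun h a ha m _ => h m trivial a ha, fun h m _ a ha => h ha m trivial⟩

theorem coe_inter_compl_ne_empty_iff {N X : Submodule Rᵐᵒᵖ M} :
    (N : Set M) ∩ (X : Set M)ᶜ ≠ ∅ ↔ ¬N ≤ X := by
  rw [← Set.nonempty_iff_ne_empty, Set.inter_compl_nonempty_iff, SetLike.coe_subset_coe]

theorem phiMSystem_compl_iff (φ : Submodule Rᵐᵒᵖ M → Set M) (X : Submodule Rᵐᵒᵖ M) :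
    PhiMSystem φ (X : Set M)ᶜ ↔ X ≠ ⊤ ∧ ∀ (Y₁ Y₂ : Submodule Rᵐᵒᵖ M) (I : TwoSidedIdeal R),
      Y₁ ≤ X → sProd (Y₂ : Set M) (I : Set R) ≤ X →
      ¬((sProd (Y₂ : Set M) (I : Set R) : Set M) ⊆ φ X) →
      Y₂ ≤ X ∨ sProd Set.univ (I : Set R) ≤ X := by
  simp only [PhiMSystem, Set.nonempty_compl, Ne, coe_eq_univ, coe_inter_compl_ne_empty_iff,
    compl_compl, span_eq, sup_le_iff]
  refine and_congr_right fun _ => forall₃_congr fun Y₁ Y₂ I => ?_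
  tauto

theorem stmt_19_general (φ : Submodule Rᵐᵒᵖ M → Set M)
    (X : Submodule Rᵐᵒᵖ M) :
    PhiPrime φ X ↔ PhiMSystem φ ((X : Set M)ᶜ) := by
  rw [phiMSystem_compl_iff, PhiPrime]
  simp only [SetLike.coe_subset_coe, ← sProd_univ_le_iff]
  refine and_congr_right fun _ => ⟨fun h _ Y I _ => h Y I, fun h Y I => h ⊥ Y I bot_le⟩

/-- Let `X` be a proper submodule of `M`. Then `X` is a φ-prime
submodule of `M` iff `S = M − X` is a φ-m-system. -/
theorem stmt_19 (φ : Submodule Rᵐᵒᵖ M → Set M) (hφ : GoodPhi φ)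
    (X : Submodule Rᵐᵒᵖ M) (hX : X ≠ ⊤) :
    PhiPrime φ X ↔ PhiMSystem φ ((X : Set M)ᶜ) :=
  stmt_19_general φ X
end
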